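/- arXiv:1301.4864 — 2 statements merged into one kernel-verified Lean document; each statement's English description precedes it below -/
import Mathlib

section
/- Let (L, [·,·]) be a graded Lie algebra, 𝔞 ⊂ L an abelian graded Lie subalgebra, P : L → 𝔞 a projection (P² = P) whose kernel is a graded Lie subalgebra of L, and Δ ∈ L_1 with [Δ,Δ] = 0 and Δ ∈ Ker(P). Then the multibrackets on 𝔞 defined by {a_1,…,a_n} := P[⋯[[Δ,a_1],a_2],…,a_n] are graded symmetric: for any permutation σ, {a_{σ(1)},…,a_{σ(n)}} = ε(σ){a_1,…,a_n}, where ε(σ) is the Koszul sign. -/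
/-!
STATEMENT 6: Let `(L, [·,·])` be a graded Lie algebra, `𝔞 ⊂ L` an abelian graded
subalgebra, `P : L → 𝔞` a projection whose kernel is a subalgebra, and `Δ ∈ L₁` with
`[Δ,Δ] = 0`, `Δ ∈ Ker P` (a V-data).  Then the derived multibrackets
`{a₁,…,aₙ} = P[⋯[[Δ,a₁],a₂],…,aₙ]` are graded symmetric: exchanging two (adjacent)
homogeneous arguments `a, b` produces the Koszul sign `(-1)^{|a||b|}` (invariance under
adjacent transpositions with Koszul signs is equivalent to invariance under all
permutations with the Koszul sign `ε(σ)`).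
-/

namespace Stmt6

/-- An (abstract) graded Lie algebra structure on a real vector space `L`. -/
structure GradedLieData (L : Type) [AddCommGroup L] [Module ℝ L] where
  grading : ℤ → Submodule ℝ L
  br : L →ₗ[ℝ] L →ₗ[ℝ] L
  br_deg : ∀ (i j : ℤ) (x y : L), x ∈ grading i → y ∈ grading j → br x y ∈ grading (i + j)
  br_antisymm : ∀ (i j : ℤ) (x y : L), x ∈ grading i → y ∈ grading j →
    br x y = -(((-1 : ℝ) ^ (i * j)) • br y x)
  br_jacobi : ∀ (i j : ℤ) (x y z : L), x ∈ grading i → y ∈ grading j →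
    br x (br y z) = br (br x y) z + ((-1 : ℝ) ^ (i * j)) • br y (br x z)

variable {L : Type} [AddCommGroup L] [Module ℝ L]

/-- The `n`-th derived multibracket `{a₁,…,aₙ} = P [⋯[[Δ,a₁],a₂],…,aₙ]` evaluated on a
list of arguments. -/
noncomputable def multibracket (G : GradedLieData L) (P : L →ₗ[ℝ] L) (Δ : L)
    (l : List L) : L :=
  P (l.foldl (fun acc a => G.br acc a) Δ)

lemma foldl_smul (G : GradedLieData L) (l : List L) (c : ℝ) (x : L) :
    l.foldl (fun acc a => G.br acc a) (c • x) = c • l.foldl (fun acc a => G.br acc a) x := by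
  induction l generalizing x with
  | nil => simp
  | cons h t ih =>
    simp only [List.foldl_cons]
    rw [show G.br (c • x) h = c • G.br x h by rw [map_smul]; rfl, ih]

lemma foldl_mem (G : GradedLieData L) (l : List (L × ℤ)) :
    ∀ (d : ℤ) (x : L), x ∈ G.grading d → (∀ p ∈ l, p.1 ∈ G.grading p.2) →
      (l.map Prod.fst).foldl (fun acc a => G.br acc a) x
        ∈ G.grading (d + (l.map Prod.snd).sum) := by
  induction l with
  | nil => intro d x hx _; simpa using hx
  | cons h t ih =>
    intro d x hx hl
    simp only [List.map_cons, List.foldl_cons, List.sum_cons]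
    have := ih (d + h.2) (G.br x h.1) (G.br_deg _ _ _ _ hx (hl h (by simp)))
      (fun p hp => hl p (by simp [hp]))
    convert this using 2
    ring

lemma key (G : GradedLieData L) (d da db : ℤ) (X a b : L)
    (hX : X ∈ G.grading d) (ha : a ∈ G.grading da) (hb : b ∈ G.grading db)
    (hab : G.br a b = 0) :
    G.br (G.br X a) b = ((-1 : ℝ) ^ (da * db)) • G.br (G.br X b) a := by
  have hj := G.br_jacobi d da X a b hX ha
  rw [hab] at hj
  simp only [map_zero] at hj
  have hanti := G.br_antisymm da (d + db) a (G.br X b) ha (G.br_deg _ _ _ _ hX hb)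
  rw [hanti] at hj
  have hsign : ((-1 : ℝ) ^ (d * da)) * ((-1 : ℝ) ^ (da * (d + db))) = (-1 : ℝ) ^ (da * db) := by
    rw [← zpow_add₀ (by norm_num : (-1 : ℝ) ≠ 0)]
    have : d * da + da * (d + db) = 2 * (d * da) + da * db := by ring
    rw [this, zpow_add₀ (by norm_num : (-1 : ℝ) ≠ 0), zpow_mul]
    norm_num
  rw [smul_neg, smul_smul, hsign] at hj
  exact add_neg_eq_zero.mp hj.symm

theorem derived_multibrackets_are_graded_symmetric
    (G : GradedLieData L)
    -- the abelian subalgebra `𝔞`: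
    (𝔞 : Submodule ℝ L)
    (hab : ∀ a ∈ 𝔞, ∀ b ∈ 𝔞, G.br a b = 0)
    -- the projection `P : L → 𝔞` with `P² = P` and kernel a Lie subalgebra:
    (P : L →ₗ[ℝ] L)
    (hProj : ∀ x : L, P x ∈ 𝔞) (hPid : ∀ a ∈ 𝔞, P a = a)
    (hker : ∀ x y : L, P x = 0 → P y = 0 → P (G.br x y) = 0)
    -- the element `Δ`:
    (Δ : L) (hΔ1 : Δ ∈ G.grading 1) (hΔker : P Δ = 0) (hΔΔ : G.br Δ Δ = 0)
    -- arguments: lists of homogeneous elements of `𝔞` with recorded degrees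
    (l₁ l₂ : List (L × ℤ)) (a b : L) (da db : ℤ)
    (hmem : ∀ p ∈ l₁ ++ [(a, da), (b, db)] ++ l₂, p.1 ∈ 𝔞 ∧ p.1 ∈ G.grading p.2) :
    multibracket G P Δ ((l₁ ++ [(a, da), (b, db)] ++ l₂).map Prod.fst)
      = ((-1 : ℝ) ^ (da * db)) •
        multibracket G P Δ ((l₁ ++ [(b, db), (a, da)] ++ l₂).map Prod.fst) := by
  have ha : a ∈ 𝔞 ∧ a ∈ G.grading da := hmem (a, da) (by simp)
  have hb : b ∈ 𝔞 ∧ b ∈ G.grading db := hmem (b, db) (by simp)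
  set X := (l₁.map Prod.fst).foldl (fun acc x => G.br acc x) Δ with hXdef
  have hX : X ∈ G.grading (1 + (l₁.map Prod.snd).sum) :=
    foldl_mem G l₁ 1 Δ hΔ1 (fun p hp => (hmem p (by simp [hp])).2)
  have hkey : G.br (G.br X a) b = ((-1 : ℝ) ^ (da * db)) • G.br (G.br X b) a :=
    key G _ da db X a b hX ha.2 hb.2 (hab a ha.1 b hb.1)
  unfold multibracket
  simp only [List.map_append, List.foldl_append, List.map_cons, List.map_nil,
    List.foldl_cons, List.foldl_nil]
  rw [← hXdef, hkey, foldl_smul, map_smul]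

end Stmt6
end

section
/- Let L = χ((U×V)[1]) with the commutator bracket, 𝔞 = C(U[1]) ⊗ V[1] (vector fields with coefficients depending only on U-coordinates in the V-directions), P : L → 𝔞 the natural projection, and Δ = Q_U + Q_V for Lie algebra structures on U and V. Then (L, 𝔞, P, Δ) is a V-data: 𝔞 is abelian, Ker(P) (which consists exactly of vector fields on (U×V)[1] tangent to (U×{0})[1]) is a Lie subalgebra of L, Δ ∈ Ker(P), and [Δ,Δ] = 0. -/
/-!
STATEMENT 11: Let `U, V` be Lie algebras, `W = U × V`, and let
`L = χ((U×V)[1])` be the graded Lie algebra of vector fields on `(U×V)[1]`, realized as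
(multilinear, alternating) maps `Wⁿ → W` with the Nijenhuis–Richardson bracket (defined
below by the unshuffle/permutation-sum formula).  Let `𝔞 = C(U[1]) ⊗ V[1]` (fields whose
coefficients depend only on the `U`-coordinates and point in the `V`-directions),
`P : L → 𝔞` the natural projection, and `Δ = Q_U + Q_V`.  Then `(L, 𝔞, P, Δ)` is a
V-data: `𝔞` is abelian, `Ker P` (the fields tangent to `(U×{0})[1]`) is a Lie
subalgebra, `Δ ∈ Ker P`, and `[Δ,Δ] = 0`.
-/

namespace Stmt11

variable (U V : Type) [LieRing U] [LieAlgebra ℝ U] [LieRing V] [LieAlgebra ℝ V]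

/-- insertion `i_g f` of an `n`-ary field `g` into an `(m+1)`-ary field `f`,
via the (normalized) sum over all permutations with signs. -/
noncomputable def nrComp (m n : ℕ)
    (f : (Fin m → U × V) → U × V) (g : (Fin n → U × V) → U × V) :
    (Fin (m + n - 1) → U × V) → U × V :=
  match m with
  | 0 => 0
  | (m' + 1) => fun x =>
      (((n.factorial * m'.factorial : ℕ) : ℝ))⁻¹ •
        ∑ σ : Equiv.Perm (Fin (m' + 1 + n - 1)),
          (Equiv.Perm.sign σ : ℤ) •
            f (Fin.cons
                (g fun i => x (σ (Fin.cast (by omega) (Fin.castAdd m' i))))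
                (fun j => x (σ (Fin.cast (by omega) (Fin.natAdd n j)))))

/-- the Nijenhuis–Richardson (graded) bracket of an `m`-ary and an `n`-ary field
(of degrees `m−1` and `n−1`). -/
noncomputable def nrBracket (m n : ℕ)
    (f : (Fin m → U × V) → U × V) (g : (Fin n → U × V) → U × V) :
    (Fin (m + n - 1) → U × V) → U × V :=
  fun x => nrComp U V m n f g x
    - ((-1 : ℝ) ^ (((m : ℤ) - 1) * ((n : ℤ) - 1))) •
        nrComp U V n m g f (fun i => x (Fin.cast (by omega) i))

/-- multilinearity (part of being a vector field in this model). -/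
def IsML (n : ℕ) (f : (Fin n → U × V) → U × V) : Prop :=
  ∃ F : MultilinearMap ℝ (fun _ : Fin n => U × V) (U × V), f = ⇑F

/-- the projection `P : L → 𝔞 = C(U[1]) ⊗ V[1]`: restrict the inputs to the
`U`-coordinates and keep the `V`-component of the output. -/
noncomputable def Pproj (n : ℕ) (f : (Fin n → U × V) → U × V) :
    (Fin n → U × V) → U × V :=
  fun x => ((0 : U), (f fun i => ((x i).1, 0)).2)

/-- `Δ = Q_U + Q_V`, the homological vector field encoding both Lie brackets. -/
noncomputable def Delta : (Fin 2 → U × V) → U × V :=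
  fun x => (⁅(x 0).1, (x 1).1⁆, ⁅(x 0).2, (x 1).2⁆)

set_option linter.unusedSectionVars false

lemma sum_perm3 {M : Type} [AddCommGroup M] (F : Fin 3 → Fin 3 → Fin 3 → M) :
    ∑ σ : Equiv.Perm (Fin 3), (Equiv.Perm.sign σ : ℤ) • F (σ 0) (σ 1) (σ 2)
    = F 0 1 2 - F 1 0 2 - F 2 1 0 - F 0 2 1 + F 1 2 0 + F 2 0 1 := by
  rw [show (Finset.univ : Finset (Equiv.Perm (Fin 3))) =
    {1, Equiv.swap 0 1, Equiv.swap 0 2, Equiv.swap 1 2,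
     Equiv.swap 0 1 * Equiv.swap 1 2, Equiv.swap 1 2 * Equiv.swap 0 1} from by decide]
  rw [Finset.sum_insert (by decide), Finset.sum_insert (by decide),
      Finset.sum_insert (by decide), Finset.sum_insert (by decide),
      Finset.sum_insert (by decide), Finset.sum_singleton]
  have h01 : (Equiv.Perm.sign (Equiv.swap (0:Fin 3) 1) : ℤ) = -1 := by decide
  have h02 : (Equiv.Perm.sign (Equiv.swap (0:Fin 3) 2) : ℤ) = -1 := by decide
  have h12 : (Equiv.Perm.sign (Equiv.swap (1:Fin 3) 2) : ℤ) = -1 := by decide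
  have hc1 : (Equiv.Perm.sign (Equiv.swap (0:Fin 3) 1 * Equiv.swap 1 2) : ℤ) = 1 := by decide
  have hc2 : (Equiv.Perm.sign (Equiv.swap (1:Fin 3) 2 * Equiv.swap 0 1) : ℤ) = 1 := by decide
  rw [h01, h02, h12, hc1, hc2]
  simp only [Equiv.Perm.one_apply, Equiv.Perm.mul_apply,
    show Equiv.swap (0:Fin 3) 1 0 = 1 from by decide,
    show Equiv.swap (0:Fin 3) 1 1 = 0 from by decide,
    show Equiv.swap (0:Fin 3) 1 2 = 2 from by decide,
    show Equiv.swap (0:Fin 3) 2 0 = 2 from by decide,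
    show Equiv.swap (0:Fin 3) 2 1 = 1 from by decide,
    show Equiv.swap (0:Fin 3) 2 2 = 0 from by decide,
    show Equiv.swap (1:Fin 3) 2 0 = 0 from by decide,
    show Equiv.swap (1:Fin 3) 2 1 = 2 from by decide,
    show Equiv.swap (1:Fin 3) 2 2 = 1 from by decide,
    map_one, Units.val_one, one_smul, neg_smul]
  abel

lemma jac {L : Type} [LieRing L] (a b c : L) :
    ⁅⁅a,b⁆,c⁆ - ⁅⁅b,a⁆,c⁆ - ⁅⁅c,b⁆,a⁆ - ⁅⁅a,c⁆,b⁆ + ⁅⁅b,c⁆,a⁆ + ⁅⁅c,a⁆,b⁆ = 0 := by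
  rw [← lie_skew a b, ← lie_skew b c, ← lie_skew c a, neg_lie, neg_lie, neg_lie]
  have h := lie_jacobi a b c
  simp only [lie_lie] at *
  rw [show ⁅b,⁅a,c⁆⁆ = -⁅b,⁅c,a⁆⁆ by rw [← lie_skew a c, lie_neg],
      show ⁅c,⁅b,a⁆⁆ = -⁅c,⁅a,b⁆⁆ by rw [← lie_skew a b, lie_neg, neg_neg],
      show ⁅a,⁅c,b⁆⁆ = -⁅a,⁅b,c⁆⁆ by rw [← lie_skew b c, lie_neg, neg_neg],
      show ⁅a,⁅b,c⁆⁆ = -(⁅b,⁅c,a⁆⁆ + ⁅c,⁅a,b⁆⁆) by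
        rw [eq_neg_iff_add_eq_zero, ← add_assoc]; exact h]
  abel

lemma mem_a_eval {n : ℕ} {f : (Fin n → U × V) → U × V} (hf : IsML U V n f)
    (hP : Pproj U V n f = f) {x : Fin n → U × V} {j : Fin n} (hx : (x j).1 = 0) :
    f x = 0 := by
  obtain ⟨F, rfl⟩ := hf
  rw [← congrFun hP x]
  show ((0:U), (F fun i => ((x i).1, 0)).2) = 0
  have hz : (fun i => (((x i).1 : U), (0:V))) j = 0 := by
    show ((x j).1, (0:V)) = 0
    rw [hx]; rfl
  rw [F.map_coord_zero j hz]
  rfl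

lemma ker_eval {n : ℕ} {f : (Fin n → U × V) → U × V} (hP : Pproj U V n f = 0)
    {x : Fin n → U × V} (hx : ∀ i, (x i).2 = 0) : (f x).2 = 0 := by
  have hxx : (fun i => (((x i).1 : U), (0:V))) = x :=
    funext fun i => by rw [← hx i]
  have h2 : (f fun i => ((x i).1, 0)).2 = (0 : V) :=
    congrArg Prod.snd (congrFun hP x : Pproj U V n f x = (0 : U × V))
  rwa [hxx] at h2

lemma comp_abelian (a b : ℕ) (f : (Fin a → U × V) → U × V) (g : (Fin b → U × V) → U × V)
    (hf : IsML U V a f) (hPf : Pproj U V a f = f) (hPg : Pproj U V b g = g)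
    (y : Fin (a + b - 1) → U × V) : nrComp U V a b f g y = 0 := by
  cases a with
  | zero => rfl
  | succ a' =>
    simp only [nrComp]
    rw [Finset.sum_eq_zero, smul_zero]
    intro σ _
    have h1 : ((Fin.cons (g fun i => y (σ (Fin.cast (by omega) (Fin.castAdd a' i))))
        (fun j => y (σ (Fin.cast (by omega) (Fin.natAdd b j)))) : Fin (a'+1) → U × V) 0).1
        = 0 := by
      rw [Fin.cons_zero, ← congrFun hPg]
      rfl
    rw [mem_a_eval U V hf hPf h1, smul_zero]

lemma comp_ker (a b : ℕ) (f : (Fin a → U × V) → U × V) (g : (Fin b → U × V) → U × V)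
    (hPf : Pproj U V a f = 0) (hPg : Pproj U V b g = 0)
    (y : Fin (a + b - 1) → U × V) (hy : ∀ i, (y i).2 = 0) :
    (nrComp U V a b f g y).2 = 0 := by
  cases a with
  | zero => rfl
  | succ a' =>
    simp only [nrComp]
    rw [Prod.smul_snd, Prod.snd_sum, Finset.sum_eq_zero, smul_zero]
    intro σ _
    rw [Prod.smul_snd, ker_eval U V hPf, smul_zero]
    intro i
    refine Fin.cases ?_ (fun j => ?_) i
    · rw [Fin.cons_zero]
      exact ker_eval U V hPg (fun i => hy _)
    · rw [Fin.cons_succ]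
      exact hy _

lemma delta_comp (x : Fin (2 + 2 - 1) → U × V) :
    nrComp U V 2 2 (Delta U V) (Delta U V) x = 0 := by
  have h : nrComp U V 2 2 (Delta U V) (Delta U V) x
      = (((Nat.factorial 2 * Nat.factorial 1 : ℕ) : ℝ))⁻¹ •
        ∑ σ : Equiv.Perm (Fin 3), (Equiv.Perm.sign σ : ℤ) •
          ((fun a b c => ((⁅⁅(x a).1, (x b).1⁆, (x c).1⁆,
            ⁅⁅(x a).2, (x b).2⁆, (x c).2⁆) : U × V)) (σ 0) (σ 1) (σ 2)) := rfl
  rw [h, sum_perm3 (fun a b c => ((⁅⁅(x a).1, (x b).1⁆, (x c).1⁆,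
    ⁅⁅(x a).2, (x b).2⁆, (x c).2⁆) : U × V))]
  have key : ∀ (m : U × V), m = 0 →
      (((Nat.factorial 2 * Nat.factorial 1 : ℕ) : ℝ))⁻¹ • m = 0 := fun m hm => by
    rw [hm, smul_zero]
  apply key
  rw [Prod.ext_iff]
  constructor <;>
    simp only [Prod.fst_sub, Prod.snd_sub, Prod.fst_add, Prod.snd_add, Prod.fst_zero,
      Prod.snd_zero] <;>
    exact jac _ _ _

theorem v_data_for_lie_algebra_morphisms :
    -- (1) 𝔞 is abelian (`f ∈ 𝔞` iff `P f = f`):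
    (∀ (p q : ℕ) (f : (Fin p → U × V) → U × V) (g : (Fin q → U × V) → U × V),
      IsML U V p f → IsML U V q g → Pproj U V p f = f → Pproj U V q g = g →
      nrBracket U V p q f g = 0) ∧
    -- (2) Ker P (the fields tangent to `(U×{0})[1]`) is a Lie subalgebra:
    (∀ (p q : ℕ) (f : (Fin p → U × V) → U × V) (g : (Fin q → U × V) → U × V),
      IsML U V p f → IsML U V q g → Pproj U V p f = 0 → Pproj U V q g = 0 →
      Pproj U V (p + q - 1) (nrBracket U V p q f g) = 0) ∧
    -- (3) Δ ∈ Ker P: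
    Pproj U V 2 (Delta U V) = 0 ∧
    -- (4) [Δ,Δ] = 0:
    nrBracket U V 2 2 (Delta U V) (Delta U V) = 0 := by
  refine ⟨?_, ?_, ?_, ?_⟩
  · intro p q f g hf hg hPf hPg
    funext x
    show nrComp U V p q f g x - _ • nrComp U V q p g f _ = 0
    rw [comp_abelian U V p q f g hf hPf hPg, comp_abelian U V q p g f hg hPg hPf,
      smul_zero, sub_zero]
  · intro p q f g _ _ hPf hPg
    funext x
    show ((0:U), (nrBracket U V p q f g fun i => ((x i).1, 0)).2) = 0
    have h1 := comp_ker U V p q f g hPf hPg (fun i => ((x i).1, 0)) (fun i => rfl)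
    have h2 := comp_ker U V q p g f hPg hPf
      (fun i => ((x (Fin.cast (by omega) i)).1, 0)) (fun i => rfl)
    have hb : (nrBracket U V p q f g fun i => ((x i).1, 0)).2 = 0 := by
      show (nrComp U V p q f g _ - _ • nrComp U V q p g f _).2 = 0
      rw [Prod.snd_sub, Prod.smul_snd, h1, h2, smul_zero, sub_zero]
    rw [hb]
    rfl
  · funext x
    show ((0:U), (Delta U V fun i => ((x i).1, 0)).2) = 0
    show ((0:U), ⁅(((x 0).1 : U), (0:V)).2, (((x 1).1, (0:V))).2⁆) = 0
    rw [lie_zero]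
    rfl
  · funext x
    show nrComp U V 2 2 (Delta U V) (Delta U V) x - _ • nrComp U V 2 2 (Delta U V) (Delta U V) _ = 0
    rw [delta_comp, delta_comp, smul_zero, sub_zero]

end Stmt11
end
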